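/- (Seller-Optimal / Efficient Mechanism, Corollary 1 core.) Let f and g be continuous strictly positive densities on [0,1] with CDFs F and G, and fix α ∈ [0, 1/2]. Define V(q) = ∫_{G⁻¹(1−q)}^1 v g(v) dv, qᵉ(c) = 1 − G(c), and tᵉ(c) = c·qᵉ(c) + ∫_c^1 qᵉ(x) dx. Then: (i) tᵉ(c) = ∫_c^1 v g(v) dv for every c, so the buyer's surplus V(qᵉ(c)) − tᵉ(c) equals 0 at every type c; (ii) (qᵉ, tᵉ) satisfies the incentive-compatibility and participation constraints; and (iii) for every pair of measurable functions q : [0,1] → [0,1], t : [0,1] → ℝ satisfying t(c) − c·q(c) ≥ t(c′) − c·q(c′) and t(c) − c·q(c) ≥ 0 for all c, c′, together with the buyer's ex ante rationality constraint ∫_0^1 (V(q(c)) − t(c)) f(c) dc ≥ 0, the weighted objective ∫_0^1 [α(V(q(c)) − t(c)) + (1 − α)(t(c) − c·q(c))] f(c) dc is at most (1 − α)·∫_0^1 (∫_c^1 (v − c) g(v) dv) f(c) dc, which is the value attained by (qᵉ, tᵉ). -/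

import Mathlib

/-!
The efficient mechanism is the envelope mechanism of the antitone allocation `qᵉ = 1 - G`: the
seller's rent `tᵉ(c) - c qᵉ(c) = ∫_c^1 qᵉ` is, after an integration by parts, the gains from trade
`S(c) = ∫_c^1 (v - c) g(v) dv`, so the mechanism is incentive compatible, individually rational
and leaves the buyer nothing.

For an arbitrary incentive compatible mechanism the allocation is antitone, which makes every
integrand integrable. Writing `y = G⁻¹(1 - q)`, the total surplus at type `c` is
`V(q) - c q = ∫_y^1 (v - c) g(v) dv ≤ S(c)`. Since `α ≤ 1 - α` and the buyer's ex ante surplus is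
nonnegative, the objective is at most `1 - α` times the expected total surplus.
-/

open MeasureTheory Set intervalIntegral

theorem StrictMonoOn.monotoneOn_of_rightInvOn {α β : Type*} [LinearOrder α] [Preorder β]
    {f : α → β} {finv : β → α} {s : Set α} {t : Set β} (hf : StrictMonoOn f s)
    (hfinv_mem : MapsTo finv t s) (hfinv : ∀ p ∈ t, f (finv p) = p) : MonotoneOn finv t := by
  intro p hp p' hp' hpp'
  rwa [← hf.le_iff_le (hfinv_mem hp) (hfinv_mem hp'), hfinv p hp, hfinv p' hp']

theorem integral_sub_mul_eq {g : ℝ → ℝ} {a b : ℝ} (c : ℝ) (hg : ContinuousOn g (uIcc a b)) :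
    ∫ v in a..b, (v - c) * g v = (∫ v in a..b, v * g v) - c * ∫ v in a..b, g v := by
  simp_rw [sub_mul]
  rw [integral_sub (f := fun v => v * g v) (continuousOn_id.mul hg).intervalIntegrable
    (hg.intervalIntegrable.const_mul c), intervalIntegral.integral_const_mul]

theorem integral_integral_eq_integral_sub_mul {g : ℝ → ℝ} {c b : ℝ} (hcb : c ≤ b)
    (hg : ContinuousOn g (Icc c b)) :
    ∫ x in c..b, ∫ s in x..b, g s = ∫ x in c..b, (x - c) * g x := by
  have hg' : ContinuousOn g (uIcc c b) := by rwa [uIcc_of_le hcb]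
  have hprim : ∀ x ∈ Ioo (min c b) (max c b), HasDerivAt (fun y => ∫ s in b..y, g s) (g x) x := by
    rw [min_eq_left hcb, max_eq_right hcb]
    intro x hx
    exact integral_hasDerivAt_right
      (hg.mono (uIcc_subset_Icc ⟨hcb, le_rfl⟩ (Ioo_subset_Icc_self hx))).intervalIntegrable
      (hg.mono Ioo_subset_Icc_self |>.stronglyMeasurableAtFilter isOpen_Ioo x hx)
      (hg.continuousAt (Icc_mem_nhds hx.1 hx.2))
  have := integral_mul_deriv_eq_deriv_mul_of_hasDerivAt (u := fun x => x - c) (u' := fun _ => 1)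
    (by fun_prop) (continuousOn_primitive_interval' hg'.intervalIntegrable right_mem_uIcc)
    (fun x _ => (hasDerivAt_id x).sub_const c) hprim intervalIntegrable_const
    hg'.intervalIntegrable
  simp only [integral_same, mul_zero, sub_self, zero_mul, one_mul] at this
  rw [this, zero_sub, ← intervalIntegral.integral_neg]
  simp_rw [integral_symm b]

theorem integral_sub_mul_le_of_nonneg {g : ℝ → ℝ} {y c b : ℝ}
    (hg : ContinuousOn g (uIcc y c ∪ uIcc c b)) (hg_nonneg : ∀ v ∈ uIcc y c, 0 ≤ g v) :
    ∫ v in y..b, (v - c) * g v ≤ ∫ v in c..b, (v - c) * g v := by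
  have hint : ∀ {a a'}, uIcc a a' ⊆ uIcc y c ∪ uIcc c b →
      IntervalIntegrable (fun v => (v - c) * g v) volume a a' := fun h =>
    ((continuousOn_id.sub continuousOn_const).mul (hg.mono h)).intervalIntegrable
  rw [← integral_add_adjacent_intervals (hint subset_union_left) (hint subset_union_right),
    add_le_iff_nonpos_left]
  rcases le_total y c with hyc | hcy
  · rw [← neg_nonneg, ← intervalIntegral.integral_neg]
    refine integral_nonneg hyc fun v hv => ?_
    have := hg_nonneg v (Icc_subset_uIcc hv)
    nlinarith [hv.2]
  · rw [integral_symm, neg_nonpos]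
    refine integral_nonneg hcy fun v hv => ?_
    exact mul_nonneg (sub_nonneg.2 hv.1) (hg_nonneg v (Icc_subset_uIcc' hv))

theorem AntitoneOn.sub_mul_le_integral {q : ℝ → ℝ} {c c' : ℝ} (hq : AntitoneOn q (uIcc c c')) :
    (c' - c) * q c' ≤ ∫ x in c..c', q x := by
  rcases le_total c c' with hcc' | hc'c
  · have := integral_mono_on (μ := volume) hcc' intervalIntegrable_const hq.intervalIntegrable
      fun x hx => hq (Icc_subset_uIcc hx) right_mem_uIcc hx.2
    simpa using this
  · have := integral_mono_on (μ := volume) hc'c hq.intervalIntegrable.symm intervalIntegrable_const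
      fun x hx => hq right_mem_uIcc (Icc_subset_uIcc' hx) hx.1
    rw [intervalIntegral.integral_const, smul_eq_mul] at this
    rw [integral_symm]
    linarith

theorem integral_weighted_le {a b α : ℝ} (hab : a ≤ b) (hα : α ≤ 1 / 2) {U P S w : ℝ → ℝ}
    (hU : IntervalIntegrable U volume a b) (hP : IntervalIntegrable P volume a b)
    (hS : IntervalIntegrable S volume a b) (hw : ContinuousOn w (Icc a b))
    (hw_nonneg : ∀ x ∈ Icc a b, 0 ≤ w x) (hUPS : ∀ x ∈ Icc a b, U x + P x ≤ S x)
    (hU_nonneg : 0 ≤ ∫ x in a..b, U x * w x) :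
    ∫ x in a..b, (α * U x + (1 - α) * P x) * w x ≤ (1 - α) * ∫ x in a..b, S x * w x := by
  rw [← uIcc_of_le hab] at hw
  have hUw := hU.mul_continuousOn hw
  have hPw := hP.mul_continuousOn hw
  have hsplit : ∫ x in a..b, (α * U x + (1 - α) * P x) * w x =
      α * (∫ x in a..b, U x * w x) + (1 - α) * ∫ x in a..b, P x * w x := by
    simp_rw [add_mul, mul_assoc]
    rw [integral_add (hUw.const_mul α) (hPw.const_mul (1 - α)),
      intervalIntegral.integral_const_mul, intervalIntegral.integral_const_mul]
  have hsum : (∫ x in a..b, U x * w x) + (∫ x in a..b, P x * w x) ≤ ∫ x in a..b, S x * w x := by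
    rw [← integral_add hUw hPw]
    refine integral_mono_on hab (hUw.add hPw) (hS.mul_continuousOn hw) fun x hx => ?_
    rw [← add_mul]
    exact mul_le_mul_of_nonneg_right (hUPS x hx) (hw_nonneg x hx)
  rw [hsplit]
  calc α * (∫ x in a..b, U x * w x) + (1 - α) * ∫ x in a..b, P x * w x
      ≤ (1 - α) * (∫ x in a..b, U x * w x) + (1 - α) * ∫ x in a..b, P x * w x := by
        gcongr
        linarith
    _ ≤ (1 - α) * ∫ x in a..b, S x * w x := by
        rw [← mul_add]
        exact mul_le_mul_of_nonneg_left hsum (by linarith)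

def IncentiveCompatible (q t : ℝ → ℝ) : Prop :=
  ∀ c ∈ Icc (0:ℝ) 1, ∀ c' ∈ Icc (0:ℝ) 1, t c' - c * q c' ≤ t c - c * q c

def IndividuallyRational (q t : ℝ → ℝ) : Prop :=
  ∀ c ∈ Icc (0:ℝ) 1, 0 ≤ t c - c * q c

namespace IncentiveCompatible

variable {q t : ℝ → ℝ}

theorem antitoneOn (h : IncentiveCompatible q t) : AntitoneOn q (Icc 0 1) := by
  intro c hc c' hc' hcc'
  rcases hcc'.eq_or_lt with rfl | hlt
  · exact le_rfl
  · -- adding the two constraints gives (c' - c) * (q c' - q c) ≤ 0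
    have := h c hc c' hc'
    have := h c' hc' c hc
    nlinarith

theorem antitoneOn_profit (h : IncentiveCompatible q t) (hq : ∀ c ∈ Icc (0:ℝ) 1, 0 ≤ q c) :
    AntitoneOn (fun c => t c - c * q c) (Icc 0 1) := by
  intro c hc c' hc' hcc'
  have := h c hc c' hc'
  nlinarith [hq c' hc']

theorem intervalIntegrable_profit (h : IncentiveCompatible q t)
    (hq : ∀ c ∈ Icc (0:ℝ) 1, 0 ≤ q c) : IntervalIntegrable (fun c => t c - c * q c) volume 0 1 :=
  ((h.antitoneOn_profit hq).mono (uIcc_of_le zero_le_one).subset).intervalIntegrable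

theorem intervalIntegrable (h : IncentiveCompatible q t) (hq : ∀ c ∈ Icc (0:ℝ) 1, 0 ≤ q c) :
    IntervalIntegrable t volume 0 1 := by
  have hq_int : IntervalIntegrable q volume 0 1 :=
    (h.antitoneOn.mono (uIcc_of_le zero_le_one).subset).intervalIntegrable
  simpa using (h.intervalIntegrable_profit hq).add (hq_int.continuousOn_mul continuousOn_id)

end IncentiveCompatible

theorem incentiveCompatible_of_antitoneOn {q t : ℝ → ℝ} (hq : AntitoneOn q (Icc 0 1))
    (ht : ∀ c ∈ Icc (0:ℝ) 1, t c = c * q c + ∫ x in c..1, q x) : IncentiveCompatible q t := by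
  intro c hc c' hc'
  have hint : ∀ {a b}, a ∈ Icc (0:ℝ) 1 → b ∈ Icc (0:ℝ) 1 → IntervalIntegrable q volume a b :=
    fun ha hb => (hq.mono (uIcc_subset_Icc ha hb)).intervalIntegrable
  have h1 : (1:ℝ) ∈ Icc (0:ℝ) 1 := right_mem_Icc.2 zero_le_one
  rw [ht c hc, ht c' hc', ← integral_add_adjacent_intervals (hint hc hc') (hint hc' h1)]
  have := (hq.mono (uIcc_subset_Icc hc hc')).sub_mul_le_integral
  linarith

theorem individuallyRational_of_nonneg {q t : ℝ → ℝ} (hq : ∀ c ∈ Icc (0:ℝ) 1, 0 ≤ q c)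
    (ht : ∀ c ∈ Icc (0:ℝ) 1, t c = c * q c + ∫ x in c..1, q x) : IndividuallyRational q t := by
  intro c hc
  rw [ht c hc, add_sub_cancel_left]
  exact integral_nonneg hc.2 fun x hx => hq x ⟨hc.1.trans hx.1, hx.2⟩

section Distribution

variable {g G Ginv V : ℝ → ℝ}

theorem one_sub_cdf_eq_integral (hg : ContinuousOn g (Icc 0 1))
    (hg_mass : ∫ x in (0:ℝ)..1, g x = 1) (hG : ∀ x, G x = ∫ s in (0:ℝ)..x, g s) {x : ℝ}
    (hx : x ∈ Icc (0:ℝ) 1) : 1 - G x = ∫ s in x..1, g s := by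
  rw [hG, ← integral_interval_sub_left (hg.intervalIntegrable_of_Icc zero_le_one)
    (hg.mono (uIcc_subset_Icc (left_mem_Icc.2 zero_le_one) hx)).intervalIntegrable, hg_mass]

theorem cdf_mem_Icc (hg : ContinuousOn g (Icc 0 1)) (hg_pos : ∀ x ∈ Icc (0:ℝ) 1, 0 < g x)
    (hg_mass : ∫ x in (0:ℝ)..1, g x = 1) (hG : ∀ x, G x = ∫ s in (0:ℝ)..x, g s) {x : ℝ}
    (hx : x ∈ Icc (0:ℝ) 1) : G x ∈ Icc (0:ℝ) 1 := by
  have h_tail : 0 ≤ ∫ s in x..1, g s :=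
    integral_nonneg hx.2 fun s hs => (hg_pos s ⟨hx.1.trans hs.1, hs.2⟩).le
  rw [← one_sub_cdf_eq_integral hg hg_mass hG hx, sub_nonneg] at h_tail
  refine ⟨?_, h_tail⟩
  rw [hG]
  exact integral_nonneg hx.1 fun s hs => (hg_pos s ⟨hs.1, hs.2.trans hx.2⟩).le

theorem strictMonoOn_cdf (hg : ContinuousOn g (Icc 0 1)) (hg_pos : ∀ x ∈ Icc (0:ℝ) 1, 0 < g x)
    (hG : ∀ x, G x = ∫ s in (0:ℝ)..x, g s) : StrictMonoOn G (Icc 0 1) := by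
  intro a ha b hb hab
  have hint : ∀ {x y}, x ∈ Icc (0:ℝ) 1 → y ∈ Icc (0:ℝ) 1 → IntervalIntegrable g volume x y :=
    fun hx hy => (hg.mono (uIcc_subset_Icc hx hy)).intervalIntegrable
  have h0 : (0:ℝ) ∈ Icc (0:ℝ) 1 := left_mem_Icc.2 zero_le_one
  rw [hG, hG, ← sub_pos, integral_interval_sub_left (hint h0 hb) (hint h0 ha)]
  exact intervalIntegral_pos_of_pos_on (hint ha hb)
    (fun x hx => hg_pos x ⟨ha.1.trans hx.1.le, hx.2.le.trans hb.2⟩) hab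

theorem integral_one_sub_cdf (hg : ContinuousOn g (Icc 0 1))
    (hg_mass : ∫ x in (0:ℝ)..1, g x = 1) (hG : ∀ x, G x = ∫ s in (0:ℝ)..x, g s) {c : ℝ}
    (hc : c ∈ Icc (0:ℝ) 1) : ∫ x in c..1, (1 - G x) = ∫ v in c..1, (v - c) * g v := by
  rw [← integral_integral_eq_integral_sub_mul hc.2 (hg.mono (Icc_subset_Icc_left hc.1))]
  exact integral_congr fun x hx =>
    one_sub_cdf_eq_integral hg hg_mass hG (uIcc_subset_Icc hc (right_mem_Icc.2 zero_le_one) hx)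

theorem monotoneOn_value (hg : ContinuousOn g (Icc 0 1)) (hg_pos : ∀ x ∈ Icc (0:ℝ) 1, 0 < g x)
    (hG : ∀ x, G x = ∫ s in (0:ℝ)..x, g s)
    (hGinv_mem : ∀ p ∈ Icc (0:ℝ) 1, Ginv p ∈ Icc (0:ℝ) 1)
    (hGinv : ∀ p ∈ Icc (0:ℝ) 1, G (Ginv p) = p)
    (hV : ∀ q ∈ Icc (0:ℝ) 1, V q = ∫ v in (Ginv (1 - q))..1, v * g v) :
    MonotoneOn V (Icc 0 1) := by
  intro p hp p' hp' hpp'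
  have hp₁ := Icc.one_sub_mem hp
  have hp₁' := Icc.one_sub_mem hp'
  have hquantile : Ginv (1 - p') ≤ Ginv (1 - p) :=
    (strictMonoOn_cdf hg hg_pos hG).monotoneOn_of_rightInvOn hGinv_mem hGinv hp₁' hp₁
      (by linarith)
  have hy' := hGinv_mem _ hp₁'
  rw [hV p hp, hV p' hp']
  have hint : IntervalIntegrable (fun v => v * g v) volume (Ginv (1 - p')) 1 :=
    ((continuousOn_id.mul hg).mono
      (uIcc_subset_Icc hy' (right_mem_Icc.2 zero_le_one))).intervalIntegrable
  refine integral_mono_interval hquantile (hGinv_mem _ hp₁).2 le_rfl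
    (ae_restrict_of_forall_mem measurableSet_Ioc fun v hv => ?_) hint
  have hv01 : v ∈ Icc (0:ℝ) 1 := ⟨hy'.1.trans hv.1.le, hv.2⟩
  exact mul_nonneg hv01.1 (hg_pos v hv01).le

theorem value_sub_mul_le (hg : ContinuousOn g (Icc 0 1)) (hg_pos : ∀ x ∈ Icc (0:ℝ) 1, 0 < g x)
    (hg_mass : ∫ x in (0:ℝ)..1, g x = 1) (hG : ∀ x, G x = ∫ s in (0:ℝ)..x, g s)
    (hGinv_mem : ∀ p ∈ Icc (0:ℝ) 1, Ginv p ∈ Icc (0:ℝ) 1)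
    (hGinv : ∀ p ∈ Icc (0:ℝ) 1, G (Ginv p) = p)
    (hV : ∀ q ∈ Icc (0:ℝ) 1, V q = ∫ v in (Ginv (1 - q))..1, v * g v) {p c : ℝ}
    (hp : p ∈ Icc (0:ℝ) 1) (hc : c ∈ Icc (0:ℝ) 1) :
    V p - c * p ≤ ∫ v in c..1, (v - c) * g v := by
  have hy := hGinv_mem _ (Icc.one_sub_mem hp)
  have hp_eq : p = ∫ v in Ginv (1 - p)..1, g v := by
    rw [← one_sub_cdf_eq_integral hg hg_mass hG hy, hGinv _ (Icc.one_sub_mem hp), sub_sub_cancel]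
  have h1 : (1:ℝ) ∈ Icc (0:ℝ) 1 := right_mem_Icc.2 zero_le_one
  calc V p - c * p = ∫ v in Ginv (1 - p)..1, (v - c) * g v := by
        rw [integral_sub_mul_eq c (hg.mono (uIcc_subset_Icc hy h1)), ← hp_eq, hV p hp]
    _ ≤ ∫ v in c..1, (v - c) * g v :=
      integral_sub_mul_le_of_nonneg
        (hg.mono (union_subset (uIcc_subset_Icc hy hc) (uIcc_subset_Icc hc h1)))
        fun v hv => (hg_pos v (uIcc_subset_Icc hy hc hv)).le

theorem mul_one_sub_cdf_add_integral (hg : ContinuousOn g (Icc 0 1))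
    (hg_mass : ∫ x in (0:ℝ)..1, g x = 1) (hG : ∀ x, G x = ∫ s in (0:ℝ)..x, g s) {c : ℝ}
    (hc : c ∈ Icc (0:ℝ) 1) : c * (1 - G c) + ∫ x in c..1, (1 - G x) = ∫ v in c..1, v * g v := by
  rw [integral_one_sub_cdf hg hg_mass hG hc, one_sub_cdf_eq_integral hg hg_mass hG hc,
    integral_sub_mul_eq c (hg.mono (uIcc_subset_Icc hc (right_mem_Icc.2 zero_le_one)))]
  ring

theorem value_one_sub_cdf (hg : ContinuousOn g (Icc 0 1)) (hg_pos : ∀ x ∈ Icc (0:ℝ) 1, 0 < g x)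
    (hg_mass : ∫ x in (0:ℝ)..1, g x = 1) (hG : ∀ x, G x = ∫ s in (0:ℝ)..x, g s)
    (hGinv_mem : ∀ p ∈ Icc (0:ℝ) 1, Ginv p ∈ Icc (0:ℝ) 1)
    (hGinv : ∀ p ∈ Icc (0:ℝ) 1, G (Ginv p) = p)
    (hV : ∀ q ∈ Icc (0:ℝ) 1, V q = ∫ v in (Ginv (1 - q))..1, v * g v) {c : ℝ}
    (hc : c ∈ Icc (0:ℝ) 1) : V (1 - G c) = ∫ v in c..1, v * g v := by
  have hGc := cdf_mem_Icc hg hg_pos hg_mass hG hc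
  rw [hV _ (Icc.one_sub_mem hGc), sub_sub_cancel,
    (strictMonoOn_cdf hg hg_pos hG).injOn (hGinv_mem _ hGc) hc (hGinv _ hGc)]

end Distribution

theorem stmt_12_general
    (f g G Ginv : ℝ → ℝ) (α : ℝ)
    (hα : α ∈ Icc (0:ℝ) (1/2))
    (hf_cont : ContinuousOn f (Icc 0 1))
    (hf_pos : ∀ x ∈ Icc (0:ℝ) 1, 0 < f x)
    (hg_cont : ContinuousOn g (Icc 0 1))
    (hg_pos : ∀ x ∈ Icc (0:ℝ) 1, 0 < g x)
    (hg_mass : ∫ x in (0:ℝ)..1, g x = 1)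
    (hG : ∀ x, G x = ∫ s in (0:ℝ)..x, g s)
    (hGinv_mem : ∀ p ∈ Icc (0:ℝ) 1, Ginv p ∈ Icc (0:ℝ) 1)
    (hGinv : ∀ p ∈ Icc (0:ℝ) 1, G (Ginv p) = p)
    (V qe te : ℝ → ℝ)
    (hV : ∀ q ∈ Icc (0:ℝ) 1, V q = ∫ v in (Ginv (1 - q))..1, v * g v)
    (hqe : ∀ c, qe c = 1 - G c)
    (hte : ∀ c, te c = c * qe c + ∫ x in c..1, qe x) :
    (∀ c ∈ Icc (0:ℝ) 1, te c = ∫ v in c..1, v * g v) ∧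
    (∀ c ∈ Icc (0:ℝ) 1, V (qe c) - te c = 0) ∧
    (∀ c ∈ Icc (0:ℝ) 1, ∀ c' ∈ Icc (0:ℝ) 1, te c' - c * qe c' ≤ te c - c * qe c) ∧
    (∀ c ∈ Icc (0:ℝ) 1, 0 ≤ te c - c * qe c) ∧
    (∀ q t : ℝ → ℝ, Measurable q → Measurable t →
      (∀ c ∈ Icc (0:ℝ) 1, q c ∈ Icc (0:ℝ) 1) →
      (∀ c ∈ Icc (0:ℝ) 1, ∀ c' ∈ Icc (0:ℝ) 1, t c' - c * q c' ≤ t c - c * q c) →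
      (∀ c ∈ Icc (0:ℝ) 1, 0 ≤ t c - c * q c) →
      (0 ≤ ∫ c in (0:ℝ)..1, (V (q c) - t c) * f c) →
      (∫ c in (0:ℝ)..1, (α * (V (q c) - t c) + (1 - α) * (t c - c * q c)) * f c) ≤
        (1 - α) * ∫ c in (0:ℝ)..1, (∫ v in c..1, (v - c) * g v) * f c) ∧
    (∫ c in (0:ℝ)..1, (α * (V (qe c) - te c) + (1 - α) * (te c - c * qe c)) * f c) =
      (1 - α) * ∫ c in (0:ℝ)..1, (∫ v in c..1, (v - c) * g v) * f c := by
  have h1 : (1:ℝ) ∈ Icc (0:ℝ) 1 := right_mem_Icc.2 zero_le_one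
  have hqe_mem : ∀ c ∈ Icc (0:ℝ) 1, qe c ∈ Icc (0:ℝ) 1 := fun c hc => by
    rw [hqe]; exact Icc.one_sub_mem (cdf_mem_Icc hg_cont hg_pos hg_mass hG hc)
  have hqe_nonneg : ∀ c ∈ Icc (0:ℝ) 1, 0 ≤ qe c := fun c hc => (hqe_mem c hc).1
  have hqe_anti : AntitoneOn qe (Icc 0 1) := fun a ha b hb hab => by
    simp only [hqe]; linarith [(strictMonoOn_cdf hg_cont hg_pos hG).monotoneOn ha hb hab]
  have hte' : ∀ c ∈ Icc (0:ℝ) 1, te c = c * qe c + ∫ x in c..1, qe x := fun c _ => hte c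
  have he_IC := incentiveCompatible_of_antitoneOn hqe_anti hte'
  have he_profit : ∀ c ∈ Icc (0:ℝ) 1, te c - c * qe c = ∫ v in c..1, (v - c) * g v :=
    fun c hc => by
      rw [hte, add_sub_cancel_left, ← integral_one_sub_cdf hg_cont hg_mass hG hc]
      simp only [hqe]
  have he_transfer : ∀ c ∈ Icc (0:ℝ) 1, te c = ∫ v in c..1, v * g v := fun c hc => by
    rw [hte, ← mul_one_sub_cdf_add_integral hg_cont hg_mass hG hc]
    simp only [hqe]
  have he_buyer : ∀ c ∈ Icc (0:ℝ) 1, V (qe c) - te c = 0 := fun c hc => by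
    rw [hqe, value_one_sub_cdf hg_cont hg_pos hg_mass hG hGinv_mem hGinv hV hc, he_transfer c hc,
      sub_self]
  refine ⟨he_transfer, he_buyer, he_IC, individuallyRational_of_nonneg hqe_nonneg hte', ?_, ?_⟩
  · intro q t _ _ hq (hIC : IncentiveCompatible q t) _ hEA
    have hq_nonneg : ∀ c ∈ Icc (0:ℝ) 1, 0 ≤ q c := fun c hc => (hq c hc).1
    have hVq : IntervalIntegrable (fun c => V (q c)) volume 0 1 :=
      (((monotoneOn_value hg_cont hg_pos hG hGinv_mem hGinv hV).comp_AntitoneOn hIC.antitoneOn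
        hq).mono (uIcc_of_le zero_le_one).subset).intervalIntegrable
    -- the gains from trade are the (antitone, hence integrable) profit of the efficient mechanism
    have hS : IntervalIntegrable (fun c => ∫ v in c..1, (v - c) * g v) volume 0 1 :=
      (he_IC.intervalIntegrable_profit hqe_nonneg).congr fun c hc =>
        he_profit c (uIcc_subset_Icc (left_mem_Icc.2 zero_le_one) h1 (uIoc_subset_uIcc hc))
    refine integral_weighted_le zero_le_one hα.2 (hVq.sub (hIC.intervalIntegrable hq_nonneg))
      (hIC.intervalIntegrable_profit hq_nonneg) hS hf_cont (fun c hc => (hf_pos c hc).le)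
      (fun c hc => ?_) hEA
    have := value_sub_mul_le hg_cont hg_pos hg_mass hG hGinv_mem hGinv hV (hq c hc) hc
    linarith
  · rw [← intervalIntegral.integral_const_mul]
    refine integral_congr fun c hc => ?_
    rw [uIcc_of_le zero_le_one] at hc
    simp only [he_buyer c hc, he_profit c hc]
    ring

/-- **Corollary 1 core (Seller-Optimal / Efficient Mechanism, α ≤ 1/2).** The efficient
allocation `qᵉ(c) = 1 − G(c)` with transfer `tᵉ(c) = c·qᵉ(c) + ∫_c^1 qᵉ(x) dx` leaves the
buyer with zero surplus at every type, is incentive compatible and individually rational,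
and maximizes the weighted objective among all incentive compatible, individually rational
pairs satisfying the buyer's ex ante rationality constraint, attaining the value
`(1 − α)·∫ (∫_c^1 (v − c) g(v) dv) f(c) dc`. -/
theorem stmt_12
    (f g F G Ginv : ℝ → ℝ) (α : ℝ)
    (hα : α ∈ Icc (0:ℝ) (1/2))
    (hf_cont : ContinuousOn f (Icc 0 1))
    (hf_pos : ∀ x ∈ Icc (0:ℝ) 1, 0 < f x)
    (hf_mass : ∫ x in (0:ℝ)..1, f x = 1)
    (hg_cont : ContinuousOn g (Icc 0 1))
    (hg_pos : ∀ x ∈ Icc (0:ℝ) 1, 0 < g x)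
    (hg_mass : ∫ x in (0:ℝ)..1, g x = 1)
    (hF : ∀ x, F x = ∫ s in (0:ℝ)..x, f s)
    (hG : ∀ x, G x = ∫ s in (0:ℝ)..x, g s)
    (hGinv_mem : ∀ p ∈ Icc (0:ℝ) 1, Ginv p ∈ Icc (0:ℝ) 1)
    (hGinv : ∀ p ∈ Icc (0:ℝ) 1, G (Ginv p) = p)
    (V qe te : ℝ → ℝ)
    (hV : ∀ q ∈ Icc (0:ℝ) 1, V q = ∫ v in (Ginv (1 - q))..1, v * g v)
    (hqe : ∀ c, qe c = 1 - G c)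
    (hte : ∀ c, te c = c * qe c + ∫ x in c..1, qe x) :
    (∀ c ∈ Icc (0:ℝ) 1, te c = ∫ v in c..1, v * g v) ∧
    (∀ c ∈ Icc (0:ℝ) 1, V (qe c) - te c = 0) ∧
    (∀ c ∈ Icc (0:ℝ) 1, ∀ c' ∈ Icc (0:ℝ) 1, te c' - c * qe c' ≤ te c - c * qe c) ∧
    (∀ c ∈ Icc (0:ℝ) 1, 0 ≤ te c - c * qe c) ∧
    (∀ q t : ℝ → ℝ, Measurable q → Measurable t →
      (∀ c ∈ Icc (0:ℝ) 1, q c ∈ Icc (0:ℝ) 1) →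
      (∀ c ∈ Icc (0:ℝ) 1, ∀ c' ∈ Icc (0:ℝ) 1, t c' - c * q c' ≤ t c - c * q c) →
      (∀ c ∈ Icc (0:ℝ) 1, 0 ≤ t c - c * q c) →
      (0 ≤ ∫ c in (0:ℝ)..1, (V (q c) - t c) * f c) →
      (∫ c in (0:ℝ)..1, (α * (V (q c) - t c) + (1 - α) * (t c - c * q c)) * f c) ≤
        (1 - α) * ∫ c in (0:ℝ)..1, (∫ v in c..1, (v - c) * g v) * f c) ∧
    (∫ c in (0:ℝ)..1, (α * (V (qe c) - te c) + (1 - α) * (te c - c * qe c)) * f c) =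
      (1 - α) * ∫ c in (0:ℝ)..1, (∫ v in c..1, (v - c) * g v) * f c :=
  stmt_12_general f g G Ginv α hα hf_cont hf_pos hg_cont hg_pos hg_mass hG hGinv_mem hGinv V qe te
    hV hqe hte
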